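/- For the controlled-NOT Hamiltonian H = σ_1 ⊗ (1−σ_3)/2 + 1 ⊗ (1+σ_3)/2 on ℂ²⊗ℂ² and initial correlation ρ_COR = Σ_{ij} γ_{ij} σ_i ⊗ σ_j, the inhomogeneous part δρ(t) = tr_B{e^{−iHt} ρ_COR e^{iHt}} equals 2(γ_{23} sin²t + γ_{33} sin t cos t) σ_2 + 2(γ_{33} sin²t − γ_{23} sin t cos t) σ_3; in particular δρ(t) = 0 for all t if and only if γ_{23} = γ_{33} = 0. -/

import Mathlib

open Matrix Kronecker Complex BigOperators

/-- Partial trace over the second (B) factor. -/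
noncomputable def ptraceB {m n : Type*} [Fintype n] (C : Matrix (m × n) (m × n) ℂ) :
    Matrix m m ℂ :=
  fun i j => ∑ k, C (i, k) (j, k)

/-- Partial trace over the first (A) factor. -/
noncomputable def ptraceA {m n : Type*} [Fintype m] (C : Matrix (m × n) (m × n) ℂ) :
    Matrix n n ℂ :=
  fun i j => ∑ k, C (k, i) (k, j)

/-- The standard Pauli matrices. -/
noncomputable def pauli : Fin 3 → Matrix (Fin 2) (Fin 2) ℂ :=
  ![!![0, 1; 1, 0], !![0, -I; I, 0], !![1, 0; 0, -1]]

/-- The controlled-NOT Hamiltonian. -/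
noncomputable def cnotH : Matrix (Fin 2 × Fin 2) (Fin 2 × Fin 2) ℂ :=
  pauli 0 ⊗ₖ (((1 : ℂ) / 2) • ((1 : Matrix (Fin 2) (Fin 2) ℂ) - pauli 2)) +
    (1 : Matrix (Fin 2) (Fin 2) ℂ) ⊗ₖ (((1 : ℂ) / 2) • ((1 : Matrix (Fin 2) (Fin 2) ℂ) + pauli 2))

/-! Since `cnotH * cnotH = 1`, the propagators are `exp (∓ i t H) = cos t ∓ i sin t • H`, so the
evolved correlation is `cos² t • ρ + sin² t • H ρ H + sin t cos t • i [ρ, H]`. The partial trace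
kills `ρ` because the Pauli matrices are traceless; of the other two terms only the components
`γ 1 2`, `γ 2 2` survive, those with `pauli 2 = σ_3` on the second factor (`pauli` is 0-indexed).
At `t = π / 2` the result is `2 γ 1 2 • pauli 1 + 2 γ 2 2 • pauli 2`, which gives the converse. -/

section PartialTrace

variable {m n : Type*} [Fintype n]

theorem ptraceB_add (C D : Matrix (m × n) (m × n) ℂ) :
    ptraceB (C + D) = ptraceB C + ptraceB D := by
  ext i j
  simp [ptraceB, Finset.sum_add_distrib]

theorem ptraceB_smul (c : ℂ) (C : Matrix (m × n) (m × n) ℂ) :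
    ptraceB (c • C) = c • ptraceB C := by
  ext i j
  simp [ptraceB, Finset.mul_sum]

theorem ptraceB_sum {ι : Type*} (s : Finset ι) (C : ι → Matrix (m × n) (m × n) ℂ) :
    ptraceB (∑ k ∈ s, C k) = ∑ k ∈ s, ptraceB (C k) := by
  ext i j
  simp only [ptraceB, Matrix.sum_apply]
  exact Finset.sum_comm

theorem ptraceB_kronecker (A : Matrix m m ℂ) (B : Matrix n n ℂ) :
    ptraceB (A ⊗ₖ B) = B.trace • A := by
  ext i j
  simp [ptraceB, Matrix.trace, Finset.sum_mul, mul_comm (A i j)]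

end PartialTrace

section Involution

open NormedSpace

variable {𝔸 : Type*} [Ring 𝔸] [Algebra ℂ 𝔸] [TopologicalSpace 𝔸] [IsTopologicalRing 𝔸]
  [ContinuousSMul ℂ 𝔸] [T2Space 𝔸] {A : 𝔸}

theorem exp_smul_eq_cosh_add_sinh (hA : A * A = 1) (z : ℂ) :
    exp (z • A) = cosh z • (1 : 𝔸) + sinh z • A := by
  have hpow (k : ℕ) : A ^ (2 * k) = 1 := by rw [pow_mul, sq, hA, one_pow]
  rw [exp_eq_tsum ℂ]
  refine HasSum.tsum_eq (HasSum.even_add_odd ?_ ?_)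
  · convert (hasSum_cosh z).smul_const (1 : 𝔸) using 2 with k
    rw [smul_pow, hpow, smul_smul, div_eq_inv_mul]
  · convert (hasSum_sinh z).smul_const A using 2 with k
    rw [smul_pow, pow_succ A, hpow, one_mul, smul_smul, div_eq_inv_mul]

theorem exp_I_mul_smul_eq_cos_add_sin (hA : A * A = 1) (x : ℂ) :
    exp ((I * x) • A) = cos x • (1 : 𝔸) + (I * sin x) • A := by
  rw [exp_smul_eq_cosh_add_sinh hA, mul_comm I x, cosh_mul_I, sinh_mul_I, mul_comm (sin x)]

end Involution

theorem sub_I_smul_mul_mul_add_I_smul {𝔸 : Type*} [Ring 𝔸] [Algebra ℂ 𝔸] (H ρ : 𝔸) (c s : ℂ) :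
    (c • 1 - (I * s) • H) * ρ * (c • 1 + (I * s) • H) =
      c ^ 2 • ρ + s ^ 2 • (H * ρ * H) + (c * s) • (I • (ρ * H - H * ρ)) := by
  simp only [sub_mul, mul_add, one_mul, mul_one, Algebra.smul_mul_assoc,
    Algebra.mul_smul_comm, smul_sub, smul_smul]
  match_scalars <;> ring_nf
  rw [I_sq]
  ring

noncomputable def pauliCorrelation (γ : Fin 3 → Fin 3 → ℝ) :
    Matrix (Fin 2 × Fin 2) (Fin 2 × Fin 2) ℂ :=
  ∑ i, ∑ j, (γ i j : ℂ) • (pauli i ⊗ₖ pauli j)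

theorem trace_pauli (i : Fin 3) : (pauli i).trace = 0 := by
  fin_cases i <;> simp [pauli, Matrix.trace]

theorem ptraceB_pauliCorrelation (γ : Fin 3 → Fin 3 → ℝ) :
    ptraceB (pauliCorrelation γ) = 0 := by
  simp only [pauliCorrelation, ptraceB_sum, ptraceB_smul, ptraceB_kronecker, trace_pauli,
    zero_smul, smul_zero, Finset.sum_const_zero]

theorem cnotH_mul_self : cnotH * cnotH = 1 := by
  ext ⟨i, i'⟩ ⟨j, j'⟩
  fin_cases i <;> fin_cases i' <;> fin_cases j <;> fin_cases j' <;>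
    simp [cnotH, pauli, Matrix.mul_apply, Fintype.sum_prod_type, Matrix.one_apply] <;> norm_num

theorem ptraceB_cnotH_mul_pauliCorrelation_mul_cnotH (γ : Fin 3 → Fin 3 → ℝ) :
    ptraceB (cnotH * pauliCorrelation γ * cnotH) =
      (2 * γ 1 2 : ℂ) • pauli 1 + (2 * γ 2 2 : ℂ) • pauli 2 := by
  ext i j
  fin_cases i <;> fin_cases j <;>
    simp [ptraceB, cnotH, pauliCorrelation, pauli, Matrix.mul_apply, Fin.sum_univ_three,
      Fintype.sum_prod_type] <;> ring

theorem ptraceB_I_smul_commutator_cnotH (γ : Fin 3 → Fin 3 → ℝ) :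
    ptraceB (I • (pauliCorrelation γ * cnotH - cnotH * pauliCorrelation γ)) =
      (2 * γ 2 2 : ℂ) • pauli 1 - (2 * γ 1 2 : ℂ) • pauli 2 := by
  ext i j
  fin_cases i <;> fin_cases j <;>
    simp [ptraceB, cnotH, pauliCorrelation, pauli, Matrix.mul_apply, Fin.sum_univ_three,
      Fintype.sum_prod_type] <;> ring_nf <;> simp

theorem ptraceB_cnot_evolution (γ : Fin 3 → Fin 3 → ℝ) (t : ℝ) :
    ptraceB (NormedSpace.exp ((-(I * t)) • cnotH) * pauliCorrelation γ *
        NormedSpace.exp ((I * t) • cnotH)) =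
      ((2 * (γ 1 2 * Real.sin t ^ 2 + γ 2 2 * Real.sin t * Real.cos t) : ℝ) : ℂ) • pauli 1 +
      ((2 * (γ 2 2 * Real.sin t ^ 2 - γ 1 2 * Real.sin t * Real.cos t) : ℝ) : ℂ) • pauli 2 := by
  rw [← mul_neg, exp_I_mul_smul_eq_cos_add_sin cnotH_mul_self,
    exp_I_mul_smul_eq_cos_add_sin cnotH_mul_self, cos_neg, sin_neg, mul_neg, neg_smul,
    ← sub_eq_add_neg, sub_I_smul_mul_mul_add_I_smul, ptraceB_add, ptraceB_add, ptraceB_smul,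
    ptraceB_smul, ptraceB_smul, ptraceB_pauliCorrelation,
    ptraceB_cnotH_mul_pauliCorrelation_mul_cnotH, ptraceB_I_smul_commutator_cnotH]
  push_cast
  match_scalars <;> ring

theorem smul_pauli_one_add_smul_pauli_two_eq_zero {a b : ℂ}
    (h : a • pauli 1 + b • pauli 2 = 0) : a = 0 ∧ b = 0 := by
  simpa [pauli] using And.intro (congrFun (congrFun h 0) 1) (congrFun (congrFun h 0) 0)

theorem cnot_inhomogeneous_part (γ : Fin 3 → Fin 3 → ℝ) :
    (∀ t : ℝ,
      ptraceB (NormedSpace.exp ((-(I * t)) • cnotH) *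
          (∑ i, ∑ j, (γ i j : ℂ) • (pauli i ⊗ₖ pauli j)) *
          NormedSpace.exp ((I * t) • cnotH)) =
        ((2 * (γ 1 2 * Real.sin t ^ 2 + γ 2 2 * Real.sin t * Real.cos t) : ℝ) : ℂ) • pauli 1 +
        ((2 * (γ 2 2 * Real.sin t ^ 2 - γ 1 2 * Real.sin t * Real.cos t) : ℝ) : ℂ) • pauli 2) ∧
    ((∀ t : ℝ,
      ptraceB (NormedSpace.exp ((-(I * t)) • cnotH) *
          (∑ i, ∑ j, (γ i j : ℂ) • (pauli i ⊗ₖ pauli j)) *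
          NormedSpace.exp ((I * t) • cnotH)) = 0) ↔ γ 1 2 = 0 ∧ γ 2 2 = 0) := by
  have hevol := ptraceB_cnot_evolution γ
  unfold pauliCorrelation at hevol
  refine ⟨hevol, fun hzero => ?_, ?_⟩
  · have h := (hevol (Real.pi / 2)).symm.trans (hzero (Real.pi / 2))
    simp only [Real.sin_pi_div_two, Real.cos_pi_div_two] at h
    obtain ⟨h1, h2⟩ := smul_pauli_one_add_smul_pauli_two_eq_zero h
    norm_num at h1 h2
    exact ⟨h1, h2⟩
  · rintro ⟨h1, h2⟩ t
    rw [hevol t, h1, h2]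
    simp
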